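/- (Error bound for the square-root measurement after projection) Let t_1,…,t_W be unit vectors in ℂ^D, let Π be an orthogonal projection on ℂ^D, set v_i = Π t_i, φ = Σ_{j=1}^W v_j v_j†, and let φ^{−1/2} denote the positive semidefinite matrix that is the inverse square root of φ on its support and zero on its kernel. Define the sub-POVM elements M_i = φ^{−1/2} v_i v_i† φ^{−1/2} (which satisfy Σ_i M_i ≤ I), and the decoding error probability P_{E,i} = 1 − t_i† M_i t_i. Then for every i, P_{E,i} ≤ 2(1 − S_{ii}) + Σ_{j≠i} S_{ij} S_{ji}, where S_{ij} = t_i† Π t_j (so S_{ij}S_{ji} = |S_{ij}|²). -/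

import Mathlib

namespace QIT

noncomputable section

open Matrix

/-- The rank-one matrix `|v⟩⟨v|`. -/
def pureState {I : Type*} (v : I → ℂ) : Matrix I I ℂ :=
  Matrix.of fun i j => v i * star (v j)

open scoped Classical in
/-- The inverse square root of a positive semidefinite matrix on its support (zero on
its kernel), defined through the spectral decomposition. -/
def invSqrtOnSupport {m : Type*} [Fintype m] [DecidableEq m]
    (φ : Matrix m m ℂ) : Matrix m m ℂ :=
  if h : φ.IsHermitian then
    (h.eigenvectorUnitary : Matrix m m ℂ) *
      Matrix.diagonal
        (fun k => ((if h.eigenvalues k = 0 then (0 : ℝ)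
          else (Real.sqrt (h.eigenvalues k))⁻¹ : ℝ) : ℂ)) *
      (h.eigenvectorUnitary : Matrix m m ℂ)ᴴ
  else 0

lemma quad_helper {n : Type*} [Fintype n] [DecidableEq n] (U : Matrix n n ℂ) (g : n → ℂ)
    (v : n → ℂ) :
    dotProduct (star v) ((U * Matrix.diagonal g * Uᴴ) *ᵥ v)
      = ∑ k, g k * (Complex.normSq ((Uᴴ *ᵥ v) k) : ℂ) := by
  have h1 : (U * Matrix.diagonal g * Uᴴ) *ᵥ v = U *ᵥ (Matrix.diagonal g *ᵥ (Uᴴ *ᵥ v)) := by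
    simp [mulVec_mulVec, Matrix.mul_assoc]
  have h2 : star v ᵥ* U = star (Uᴴ *ᵥ v) := by rw [star_mulVec, conjTranspose_conjTranspose]
  rw [h1, dotProduct_mulVec, h2]
  simp only [dotProduct, mulVec_diagonal, Pi.star_apply]
  refine Finset.sum_congr rfl fun k _ => ?_
  rw [Complex.normSq_eq_conj_mul_self]
  simp only [RCLike.star_def]
  ring

lemma conj_pureState {n : Type*} [Fintype n] (A : Matrix n n ℂ) (w : n → ℂ) :
    A * pureState w * Aᴴ = pureState (A *ᵥ w) := by
  ext a b
  simp only [Matrix.mul_apply, pureState, Matrix.of_apply, Matrix.conjTranspose_apply,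
    Matrix.mulVec, dotProduct, star_sum, star_mul']
  rw [Finset.sum_mul_sum Finset.univ Finset.univ (fun c => A a c * w c)
    (fun d => star (A b d) * star (w d))]
  rw [Finset.sum_comm]
  refine Finset.sum_congr rfl fun d _ => ?_
  rw [Finset.sum_mul]
  refine Finset.sum_congr rfl fun c _ => ?_
  ring

lemma pureState_mulVec {n : Type*} [Fintype n] (w x : n → ℂ) :
    pureState w *ᵥ x = (dotProduct (star w) x) • w := by
  ext a
  simp only [pureState, Matrix.mulVec, dotProduct, Matrix.of_apply, Pi.smul_apply,
    Pi.star_apply, smul_eq_mul, Finset.sum_mul, Finset.mul_sum]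
  refine Finset.sum_congr rfl fun c _ => ?_
  ring

lemma pureState_herm {n : Type*} (w : n → ℂ) : (pureState w).IsHermitian := by
  ext a b
  simp [pureState, Matrix.conjTranspose_apply, mul_comm]

lemma sum_mulVec' {n ι : Type*} [Fintype n] (s : Finset ι) (A : ι → Matrix n n ℂ) (x : n → ℂ) :
    (∑ j ∈ s, A j) *ᵥ x = ∑ j ∈ s, A j *ᵥ x := by
  ext a
  simp only [Matrix.mulVec, dotProduct, Matrix.sum_apply, Finset.sum_mul,
    Finset.sum_apply]
  rw [Finset.sum_comm]

lemma dotProduct_sum' {n ι : Type*} [Fintype n] (s : Finset ι) (v : n → ℂ) (y : ι → n → ℂ) :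
    dotProduct v (∑ j ∈ s, y j) = ∑ j ∈ s, dotProduct v (y j) := by
  simp only [dotProduct, Finset.sum_apply, Finset.mul_sum]
  rw [Finset.sum_comm]

lemma dot_self' {n : Type*} [Fintype n] (z : n → ℂ) :
    dotProduct (star z) z = ((∑ x, Complex.normSq (z x) : ℝ) : ℂ) := by
  push_cast
  simp only [dotProduct, Pi.star_apply, Complex.normSq_eq_conj_mul_self]
  rfl

lemma star_dot' {n : Type*} [Fintype n] (v w : n → ℂ) :
    (starRingEnd ℂ) (dotProduct (star v) w) = dotProduct (star w) v := by
  simp only [dotProduct, map_sum, Pi.star_apply, RCLike.star_def, _root_.map_mul,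
    Complex.conj_conj]
  exact Finset.sum_congr rfl fun k _ => mul_comm _ _

lemma diag_conj_mul {n : Type*} [Fintype n] [DecidableEq n] (U : Matrix n n ℂ)
    (hU2 : Uᴴ * U = 1) (f g : n → ℂ) :
    (U * Matrix.diagonal f * Uᴴ) * (U * Matrix.diagonal g * Uᴴ)
      = U * Matrix.diagonal (fun k => f k * g k) * Uᴴ := by
  calc (U * Matrix.diagonal f * Uᴴ) * (U * Matrix.diagonal g * Uᴴ)
      = U * (Matrix.diagonal f * ((Uᴴ * U) * (Matrix.diagonal g * Uᴴ))) := by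
        simp only [Matrix.mul_assoc]
    _ = U * (Matrix.diagonal f * (Matrix.diagonal g * Uᴴ)) := by rw [hU2, Matrix.one_mul]
    _ = U * Matrix.diagonal (fun k => f k * g k) * Uᴴ := by
        rw [← Matrix.mul_assoc (Matrix.diagonal f), Matrix.diagonal_mul_diagonal]
        simp only [Matrix.mul_assoc]

/-- **Error bound for the square-root measurement after projection** (Hausladen et al.,
as modified by Bennett–Shor–Smolin–Thapliyal): for unit vectors `t₁,…,t_W` in `ℂ^D`, an
orthogonal projection `Π`, `v_i = Π t_i`, `φ = Σ_j v_j v_j†`, and sub-POVM elements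
`M_i = φ^{−1/2} v_i v_i† φ^{−1/2}`, the error probability `P_{E,i} = 1 − t_i† M_i t_i`
of decoding the `i`-th vector satisfies
`P_{E,i} ≤ 2(1 − S_{ii}) + Σ_{j≠i} S_{ij} S_{ji}` where `S_{ij} = t_i† Π t_j`
(so that `S_{ij}S_{ji} = |S_{ij}|²`). -/
theorem sqrt_measurement_error_bound
    {D W : ℕ} (t : Fin W → (Fin D → ℂ))
    (ht : ∀ i, ∑ x, Complex.normSq (t i x) = 1)
    (Pj : Matrix (Fin D) (Fin D) ℂ) (hPjherm : Pj.IsHermitian) (hPjproj : Pj * Pj = Pj)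
    (φ : Matrix (Fin D) (Fin D) ℂ)
    (hφ : φ = ∑ j, pureState (Pj.mulVec (t j)))
    (M : Fin W → Matrix (Fin D) (Fin D) ℂ)
    (hM : M = fun i =>
      invSqrtOnSupport φ * pureState (Pj.mulVec (t i)) * invSqrtOnSupport φ)
    (S : Fin W → Fin W → ℂ)
    (hS : S = fun i j => dotProduct (star (t i)) (Pj.mulVec (t j))) :
    ∀ i : Fin W,
      1 - (dotProduct (star (t i)) ((M i).mulVec (t i))).re ≤
        2 * (1 - (S i i).re) + ∑ j ∈ Finset.univ.erase i, Complex.normSq (S i j) := by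
  intro i
  set v : Fin W → Fin D → ℂ := fun j => Pj *ᵥ t j with hv
  have hφh : φ.IsHermitian := by
    rw [hφ]
    show _ = _
    rw [Matrix.conjTranspose_sum]
    exact Finset.sum_congr rfl fun j _ => (pureState_herm _)
  set U : Matrix (Fin D) (Fin D) ℂ := (hφh.eigenvectorUnitary : Matrix (Fin D) (Fin D) ℂ) with hU
  set μ : Fin D → ℝ := hφh.eigenvalues with hμ
  -- basic unitary facts
  have hU1 : U * Uᴴ = 1 := by
    rw [← Matrix.star_eq_conjTranspose]
    exact (Matrix.mem_unitaryGroup_iff).mp hφh.eigenvectorUnitary.2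
  have hU2 : Uᴴ * U = 1 := by
    rw [← Matrix.star_eq_conjTranspose]
    exact (Matrix.mem_unitaryGroup_iff').mp hφh.eigenvectorUnitary.2
  have hspec : φ = U * Matrix.diagonal (fun k => ((μ k : ℝ) : ℂ)) * Uᴴ := by
    exact hφh.spectral_theorem
  -- the inverse square root
  set c : Fin D → ℝ := fun k => if μ k = 0 then (0:ℝ) else (Real.sqrt (μ k))⁻¹ with hc
  have hψdef : invSqrtOnSupport φ = U * Matrix.diagonal (fun k => ((c k : ℝ) : ℂ)) * Uᴴ := by
    rw [invSqrtOnSupport, dif_pos hφh]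
  set ψ : Matrix (Fin D) (Fin D) ℂ := invSqrtOnSupport φ with hψ
  -- projection facts
  have hPv : ∀ j, Pj *ᵥ v j = v j := by
    intro j
    rw [hv]
    show Pj *ᵥ (Pj *ᵥ t j) = _
    rw [Matrix.mulVec_mulVec, hPjproj]
  have hPφ : Pj * φ = φ := by
    rw [hφ, Finset.mul_sum]
    refine Finset.sum_congr rfl fun j _ => ?_
    ext a b
    rw [Matrix.mul_apply]
    simp only [pureState, Matrix.of_apply]
    have h1 : ∑ l, Pj a l * (v j l * star (v j b)) = (∑ l, Pj a l * v j l) * star (v j b) := by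
      rw [Finset.sum_mul]
      exact Finset.sum_congr rfl fun l _ => by ring
    have h2 : (∑ l, Pj a l * v j l) = v j a := by
      have h3 := congrFun (hPv j) a
      simpa [Matrix.mulVec, dotProduct] using h3
    rw [h1, h2]
  have hPsiL : Pj * ψ = ψ := by
    have hfac : ψ = φ * (U * Matrix.diagonal
        (fun k => if μ k = 0 then (0:ℂ) else (((Real.sqrt (μ k))⁻¹ * (μ k)⁻¹ : ℝ) : ℂ)) * Uᴴ) := by
      have hfun : (fun k => ((c k : ℝ) : ℂ)) = fun k => ((μ k : ℝ) : ℂ) *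
          (if μ k = 0 then (0:ℂ) else (((Real.sqrt (μ k))⁻¹ * (μ k)⁻¹ : ℝ) : ℂ)) := by
        funext k
        by_cases hk : μ k = 0
        · simp [hc, hk]
        · rw [if_neg hk]
          have hck : c k = (Real.sqrt (μ k))⁻¹ := by rw [hc]; simp [hk]
          have hμC : ((μ k : ℝ) : ℂ) ≠ 0 := Complex.ofReal_ne_zero.mpr hk
          rw [hck]
          push_cast
          have hrw : ((μ k : ℝ) : ℂ) * (((Real.sqrt (μ k) : ℂ))⁻¹ * ((μ k : ℝ) : ℂ)⁻¹)
              = ((μ k : ℝ) : ℂ) * ((μ k : ℝ) : ℂ)⁻¹ * ((Real.sqrt (μ k) : ℂ))⁻¹ := by ring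
          rw [hrw, mul_inv_cancel₀ hμC, one_mul]
      rw [hψdef, hspec, diag_conj_mul U hU2, hfun]
    rw [hfac, ← Matrix.mul_assoc, hPφ]
  have hψherm : ψᴴ = ψ := by
    have hstar : star (fun k => ((c k : ℝ) : ℂ)) = (fun k => ((c k : ℝ) : ℂ)) := by
      funext k
      simp [Complex.conj_ofReal]
    rw [hψdef]
    simp only [Matrix.conjTranspose_mul, Matrix.conjTranspose_conjTranspose,
      Matrix.diagonal_conjTranspose, hstar, Matrix.mul_assoc]
  have hPsiR : ψ * Pj = ψ := by
    have h := congrArg Matrix.conjTranspose hPsiL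
    rw [Matrix.conjTranspose_mul, hψherm, hPjherm.eq] at h
    exact h
  -- moving the projection through dot products
  have hmove : ∀ (y : Fin D → ℂ) (j : Fin W),
      dotProduct (star (t j)) (Pj *ᵥ y) = dotProduct (star (v j)) y := by
    intro y j
    rw [Matrix.dotProduct_mulVec]
    congr 1
    rw [hv]
    show _ = star (Pj *ᵥ t j)
    rw [Matrix.star_mulVec, hPjherm.eq]
  have hmove' : ∀ (y : Fin D → ℂ) (j : Fin W),
      dotProduct (star (v j)) (Pj *ᵥ y) = dotProduct (star (v j)) y := by
    intro y j
    rw [Matrix.dotProduct_mulVec]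
    congr 1
    conv_rhs => rw [← hPv j, Matrix.star_mulVec, hPjherm.eq]
  -- eigen-coordinates
  set w : Fin W → Fin D → ℂ := fun j => Uᴴ *ᵥ v j with hw
  set a : Fin D → ℝ := fun k => Complex.normSq (w i k) with ha
  set s : ℝ := ∑ k, a k with hs'
  set P : ℝ := ∑ k, μ k * a k with hP
  set X : ℝ := ∑ k, c k * a k with hX
  have ha0 : ∀ k, 0 ≤ a k := fun k => Complex.normSq_nonneg _
  -- quadratic forms
  have hqψ : dotProduct (star (v i)) (ψ *ᵥ v i) = (X : ℂ) := by
    rw [hψdef, quad_helper]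
    rw [hX]
    push_cast
    rfl
  have hqφ : dotProduct (star (v i)) (φ *ᵥ v i) = (P : ℂ) := by
    rw [hspec, quad_helper]
    rw [hP]
    push_cast
    rfl
  have hqs : dotProduct (star (v i)) (v i) = (s : ℂ) := by
    have h1 : U * Matrix.diagonal (fun _ : Fin D => (1:ℂ)) * Uᴴ = 1 := by
      rw [Matrix.diagonal_one, Matrix.mul_one, hU1]
    have h2 := quad_helper U (fun _ : Fin D => (1:ℂ)) (v i)
    rw [h1, Matrix.one_mulVec] at h2
    rw [h2, hs']
    push_cast
    simp
    rfl
  -- eigenvalues dominate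
  have hμk : ∀ k, μ k = ∑ j, Complex.normSq (w j k) := by
    intro k
    have h1 : Uᴴ * φ * U = Matrix.diagonal (fun k => ((μ k : ℝ) : ℂ)) := by
      rw [hspec]; simp only [Matrix.mul_assoc, hU2, Matrix.mul_one]; rw [← Matrix.mul_assoc, hU2, Matrix.one_mul]
    have h2 : Uᴴ * φ * U = ∑ j, pureState (w j) := by
      rw [hφ, Finset.mul_sum, Finset.sum_mul]
      refine Finset.sum_congr rfl fun j _ => ?_
      have := conj_pureState Uᴴ (v j)
      rw [Matrix.conjTranspose_conjTranspose] at this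
      exact this
    have h3 := congrFun (congrFun (h1.symm.trans h2) k) k
    have h4 : Matrix.diagonal (fun k => ((μ k : ℝ) : ℂ)) k k = ((μ k : ℝ) : ℂ) := by
      simp
    rw [h4] at h3
    have h5 : (∑ j, pureState (w j)) k k = ((∑ j, Complex.normSq (w j k) : ℝ) : ℂ) := by
      push_cast
      rw [Matrix.sum_apply]
      refine Finset.sum_congr rfl fun j _ => ?_
      show w j k * star (w j k) = _
      rw [RCLike.star_def, Complex.mul_conj]
    rw [h5] at h3
    exact_mod_cast h3
  have hak : ∀ k, a k ≤ μ k := by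
    intro k
    rw [hμk k]
    exact Finset.single_le_sum (f := fun j => Complex.normSq (w j k))
      (fun j _ => Complex.normSq_nonneg _) (Finset.mem_univ i)
  -- key scalar inequality summed
  have hkey : 3 * s - P ≤ 2 * X := by
    have hpt : ∀ k ∈ Finset.univ, 3 * a k - μ k * a k ≤ 2 * (c k * a k) := by
      intro k _
      rcases eq_or_lt_of_le (ha0 k) with h | h
      · simp [← h]
      · have hμpos : 0 < μ k := lt_of_lt_of_le h (hak k)
        have hμne : μ k ≠ 0 := ne_of_gt hμpos
        have hck : c k = (Real.sqrt (μ k))⁻¹ := by rw [hc]; simp [hμne]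
        set r : ℝ := Real.sqrt (μ k) with hr
        have hrpos : 0 < r := Real.sqrt_pos.mpr hμpos
        have hr2 : r ^ 2 = μ k := Real.sq_sqrt (le_of_lt hμpos)
        have hrinv : r * r⁻¹ = 1 := mul_inv_cancel₀ (ne_of_gt hrpos)
        have hineq : (3 - μ k) / 2 ≤ c k := by
          rw [hck, ← hr2]
          have hcube : 0 ≤ r⁻¹ * ((r - 1)^2 * (r + 2)) := by positivity
          nlinarith [hcube, hrinv, sq_nonneg r]
        nlinarith [mul_le_mul_of_nonneg_right hineq (ha0 k)]
    calc 3 * s - P = ∑ k, (3 * a k - μ k * a k) := by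
          rw [hs', hP, Finset.mul_sum, ← Finset.sum_sub_distrib]
      _ ≤ ∑ k, 2 * (c k * a k) := Finset.sum_le_sum hpt
      _ = 2 * X := by rw [hX, Finset.mul_sum]
  -- the measured probability
  have hψt : ψ *ᵥ t i = ψ *ᵥ v i := by
    rw [hv]
    show _ = ψ *ᵥ (Pj *ᵥ t i)
    rw [Matrix.mulVec_mulVec, hPsiR]
  have hdtψ : dotProduct (star (t i)) (ψ *ᵥ v i) = (X : ℂ) := by
    conv_lhs => rw [← hPsiL, ← Matrix.mulVec_mulVec]
    rw [hmove, hqψ]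
  have hQ : dotProduct (star (t i)) ((M i).mulVec (t i)) = ((X * X : ℝ) : ℂ) := by
    rw [hM]
    show dotProduct (star (t i)) ((ψ * pureState (v i) * ψ) *ᵥ t i) = _
    rw [← Matrix.mulVec_mulVec, ← Matrix.mulVec_mulVec, hψt, pureState_mulVec, hqψ,
      Matrix.mulVec_smul, dotProduct_smul, hdtψ]
    push_cast
    simp [smul_eq_mul]
  -- the overlaps S
  have hSij : ∀ j, S i j = dotProduct (star (v i)) (v j) := by
    intro j
    rw [hS]
    show dotProduct (star (t i)) (Pj *ᵥ t j) = _
    rw [hmove]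
    rw [← hmove' (t j) i]
  have hSii : S i i = (s : ℂ) := by rw [hSij i, hqs]
  have hsum : ∑ j, Complex.normSq (S i j) = P := by
    have h1 : ((∑ j, Complex.normSq (S i j) : ℝ) : ℂ)
        = dotProduct (star (v i)) (φ *ᵥ v i) := by
      rw [hφ, sum_mulVec', dotProduct_sum']
      push_cast
      refine Finset.sum_congr rfl fun j _ => ?_
      rw [pureState_mulVec, dotProduct_smul, hSij j, smul_eq_mul,
        ← star_dot' (v i) (v j), Complex.normSq_eq_conj_mul_self]
      try ring
    rw [hqφ] at h1
    exact_mod_cast h1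
  -- s ≤ 1
  have hs1 : s ≤ 1 := by
    have hvt : dotProduct (star (v i)) (t i) = (s : ℂ) := by
      calc dotProduct (star (v i)) (t i)
          = dotProduct (star (v i)) (Pj *ᵥ t i) := (hmove' (t i) i).symm
        _ = dotProduct (star (v i)) (v i) := rfl
        _ = (s : ℂ) := hqs
    have htv : dotProduct (star (t i)) (v i) = (s : ℂ) := by
      calc dotProduct (star (t i)) (v i)
          = dotProduct (star (t i)) (Pj *ᵥ t i) := rfl
        _ = dotProduct (star (v i)) (t i) := hmove (t i) i
        _ = (s : ℂ) := hvt
    have htt : dotProduct (star (t i)) (t i) = (1 : ℂ) := by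
      rw [dot_self', ht i]
      norm_num
    have hu : ((∑ x, Complex.normSq ((t i - v i) x) : ℝ) : ℂ) = ((1 - s : ℝ) : ℂ) := by
      have := dot_self' (t i - v i)
      rw [← this]
      have hexp : dotProduct (star (t i - v i)) (t i - v i)
          = dotProduct (star (t i)) (t i) - dotProduct (star (t i)) (v i)
            - dotProduct (star (v i)) (t i) + dotProduct (star (v i)) (v i) := by
        rw [star_sub, sub_dotProduct, dotProduct_sub, dotProduct_sub]
        ring
      rw [hexp, htt, htv, hvt, hqs]
      push_cast
      ring
    have h0 : (0:ℝ) ≤ ∑ x, Complex.normSq ((t i - v i) x) :=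
      Finset.sum_nonneg fun x _ => Complex.normSq_nonneg _
    have := Complex.ofReal_injective hu
    linarith
  have hs0 : 0 ≤ s := Finset.sum_nonneg fun k _ => ha0 k
  -- conclude
  have herase : ∑ j ∈ Finset.univ.erase i, Complex.normSq (S i j) = P - s * s := by
    rw [Finset.sum_erase_eq_sub (Finset.mem_univ i), hsum, hSii, Complex.normSq_ofReal]
  rw [hQ, herase, hSii]
  simp only [Complex.ofReal_re]
  nlinarith [sq_nonneg (X - 1), mul_nonneg hs0 (by linarith : (0:ℝ) ≤ 1 - s)]

end

end QIT
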